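/- The function z(x) = −(1/(16π²)) · ln(1 + (π/√6)|x|²) on ℝ⁴ satisfies the biharmonic equation (−Δ)² z = e^{64π² z}, i.e., Δ(Δz) = e^{64π² z} pointwise on ℝ⁴ (with the convention (−Δ)² = Δ²). -/

import Mathlib

open Real

/-- The Euclidean Laplacian on `ℝ⁴`, written as the sum of the second partial
derivatives in the coordinate directions. -/
noncomputable def lap4 (f : EuclideanSpace ℝ (Fin 4) → ℝ) (x : EuclideanSpace ℝ (Fin 4)) : ℝ :=
  ∑ i : Fin 4,
    fderiv ℝ (fun y => fderiv ℝ f y (EuclideanSpace.single i (1:ℝ))) x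
      (EuclideanSpace.single i (1:ℝ))

/-- `z(x) = −(1/(16π²)) ln(1 + (π/√6)|x|²)` on `ℝ⁴`. -/
noncomputable def zfun (x : EuclideanSpace ℝ (Fin 4)) : ℝ :=
  -(1 / (16 * π ^ 2)) * Real.log (1 + (π / Real.sqrt 6) * ‖x‖ ^ 2)

noncomputable def aa : ℝ := π / Real.sqrt 6
noncomputable def cc : ℝ := 1 / (16 * π ^ 2)

lemma aa_pos : 0 < aa := div_pos pi_pos (Real.sqrt_pos.2 (by norm_num))

lemma aa_sq : aa ^ 2 = π ^ 2 / 6 := by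
  rw [aa, div_pow, Real.sq_sqrt (by norm_num : (0:ℝ) ≤ 6)]

lemma cc_aa_sq : cc * aa ^ 2 = 1 / 96 := by
  rw [cc, aa_sq]
  have := Real.pi_ne_zero
  field_simp
  ring

noncomputable def g0 (s : ℝ) : ℝ := -cc * Real.log (1 + aa * s)
noncomputable def g1 (s : ℝ) : ℝ := -(cc * aa) / (1 + aa * s)
noncomputable def g2 (s : ℝ) : ℝ := cc * aa ^ 2 / (1 + aa * s) ^ 2
noncomputable def hh0 (s : ℝ) : ℝ := (-4 * cc * aa) * (2 + aa * s) / (1 + aa * s) ^ 2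
noncomputable def hh1 (s : ℝ) : ℝ := (4 * (cc * aa ^ 2)) * (3 + aa * s) / (1 + aa * s) ^ 3
noncomputable def hh2 (s : ℝ) : ℝ := (-8 * (cc * aa ^ 2) * aa) * (4 + aa * s) / (1 + aa * s) ^ 4

lemma t_pos {s : ℝ} (hs : 0 ≤ s) : 0 < 1 + aa * s :=
  add_pos_of_pos_of_nonneg one_pos (mul_nonneg aa_pos.le hs)

lemma hasDerivAt_L (s : ℝ) : HasDerivAt (fun s : ℝ => 1 + aa * s) aa s := by
  simpa using ((hasDerivAt_id s).const_mul aa).const_add 1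

lemma hasDerivAt_g0 (s : ℝ) (hs : 0 ≤ s) : HasDerivAt g0 (g1 s) s := by
  have ht := t_pos hs
  have h := ((hasDerivAt_L s).log ht.ne').const_mul (-cc)
  have he : g1 s = -cc * (aa / (1 + aa * s)) := by simp only [g1]; ring
  rw [he]
  exact h

lemma hasDerivAt_g1 (s : ℝ) (hs : 0 ≤ s) : HasDerivAt g1 (g2 s) s := by
  have ht := t_pos hs
  have h : HasDerivAt g1 _ s := (hasDerivAt_const s (-(cc * aa))).div (hasDerivAt_L s) ht.ne'
  convert h using 1
  simp only [g2]
  field_simp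
  ring

lemma hasDerivAt_hh0 (s : ℝ) (hs : 0 ≤ s) : HasDerivAt hh0 (hh1 s) s := by
  have ht := t_pos hs
  have hu : HasDerivAt (fun s : ℝ => (-4 * cc * aa) * (2 + aa * s)) ((-4 * cc * aa) * aa) s :=
    (((hasDerivAt_id s).const_mul aa).const_add 2).const_mul _ |>.congr_deriv (by ring)
  have hv : HasDerivAt (fun s : ℝ => (1 + aa * s) ^ 2) (2 * (1 + aa * s) ^ 1 * aa) s :=
    (hasDerivAt_L s).pow 2
  have h : HasDerivAt hh0 _ s := hu.div hv (pow_ne_zero 2 ht.ne')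
  convert h using 1
  simp only [hh1]
  field_simp
  ring

lemma hasDerivAt_hh1 (s : ℝ) (hs : 0 ≤ s) : HasDerivAt hh1 (hh2 s) s := by
  have ht := t_pos hs
  have hu : HasDerivAt (fun s : ℝ => (4 * (cc * aa ^ 2)) * (3 + aa * s))
      ((4 * (cc * aa ^ 2)) * aa) s :=
    (((hasDerivAt_id s).const_mul aa).const_add 3).const_mul _ |>.congr_deriv (by ring)
  have hv : HasDerivAt (fun s : ℝ => (1 + aa * s) ^ 3) (3 * (1 + aa * s) ^ 2 * aa) s :=
    (hasDerivAt_L s).pow 3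
  have h : HasDerivAt hh1 _ s := hu.div hv (pow_ne_zero 3 ht.ne')
  convert h using 1
  simp only [hh2]
  field_simp
  ring

lemma norm_sq_sum (x : EuclideanSpace ℝ (Fin 4)) : ‖x‖ ^ 2 = ∑ i : Fin 4, (x i) ^ 2 := by
  rw [PiLp.norm_sq_eq_of_L2]
  simp [sq_abs]

lemma lap4_radial (f₀ f₁ f₂ : ℝ → ℝ)
    (hd1 : ∀ s : ℝ, 0 ≤ s → HasDerivAt f₀ (f₁ s) s)
    (hd2 : ∀ s : ℝ, 0 ≤ s → HasDerivAt f₁ (f₂ s) s)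
    (x : EuclideanSpace ℝ (Fin 4)) :
    lap4 (fun y => f₀ (‖y‖ ^ 2)) x
      = 8 * f₁ (‖x‖ ^ 2) + 4 * ‖x‖ ^ 2 * f₂ (‖x‖ ^ 2) := by
  have hnsq : ∀ y : EuclideanSpace ℝ (Fin 4),
      HasFDerivAt (fun y : EuclideanSpace ℝ (Fin 4) => ‖y‖ ^ 2) (2 • (innerSL ℝ y)) y :=
    fun y => (hasStrictFDerivAt_norm_sq y).hasFDerivAt
  have hcomp : ∀ y : EuclideanSpace ℝ (Fin 4),
      HasFDerivAt (fun y : EuclideanSpace ℝ (Fin 4) => f₀ (‖y‖ ^ 2))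
        (f₁ (‖y‖ ^ 2) • (2 • (innerSL ℝ y))) y :=
    fun y => (hd1 _ (sq_nonneg _)).comp_hasFDerivAt y (hnsq y)
  have hfd : ∀ (i : Fin 4) (y : EuclideanSpace ℝ (Fin 4)),
      fderiv ℝ (fun y => f₀ (‖y‖ ^ 2)) y (EuclideanSpace.single i (1:ℝ))
        = 2 * y i * f₁ (‖y‖ ^ 2) := by
    intro i y
    rw [(hcomp y).fderiv]
    simp [real_inner_comm, EuclideanSpace.inner_single_right]
    ring
  have hstep : ∀ i : Fin 4,
      fderiv ℝ (fun y => fderiv ℝ (fun y => f₀ (‖y‖ ^ 2)) y (EuclideanSpace.single i (1:ℝ))) x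
        (EuclideanSpace.single i (1:ℝ))
      = 2 * f₁ (‖x‖ ^ 2) + 4 * (x i) ^ 2 * f₂ (‖x‖ ^ 2) := by
    intro i
    have hfun : (fun y => fderiv ℝ (fun y => f₀ (‖y‖ ^ 2)) y (EuclideanSpace.single i (1:ℝ)))
        = fun y : EuclideanSpace ℝ (Fin 4) => (2 * y i) * f₁ (‖y‖ ^ 2) := by
      funext y; rw [hfd i y]
    rw [hfun]
    have hu : HasFDerivAt (fun y : EuclideanSpace ℝ (Fin 4) => 2 * y i)
        ((2:ℝ) • (EuclideanSpace.proj i : EuclideanSpace ℝ (Fin 4) →L[ℝ] ℝ)) x :=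
      (EuclideanSpace.proj i : EuclideanSpace ℝ (Fin 4) →L[ℝ] ℝ).hasFDerivAt.const_mul (2:ℝ)
    have hv : HasFDerivAt (fun y : EuclideanSpace ℝ (Fin 4) => f₁ (‖y‖ ^ 2))
        (f₂ (‖x‖ ^ 2) • (2 • (innerSL ℝ x))) x :=
      (hd2 _ (sq_nonneg _)).comp_hasFDerivAt x (hnsq x)
    have hm := hu.mul hv
    rw [show (fun y : EuclideanSpace ℝ (Fin 4) => 2 * y i * f₁ (‖y‖ ^ 2)) = (fun y => 2 * y i) * (fun y => f₁ (‖y‖ ^ 2)) from rfl, hm.fderiv]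
    simp [real_inner_comm, EuclideanSpace.inner_single_right]
    ring
  unfold lap4
  rw [Finset.sum_congr rfl fun i _ => hstep i, Finset.sum_add_distrib, Finset.sum_const]
  have : ∑ i : Fin 4, 4 * (x i) ^ 2 * f₂ (‖x‖ ^ 2)
      = 4 * ‖x‖ ^ 2 * f₂ (‖x‖ ^ 2) := by
    rw [norm_sq_sum, Finset.mul_sum, Finset.sum_mul]
  rw [this]
  simp
  ring

lemma zfun_eq : zfun = fun y => g0 (‖y‖ ^ 2) := by
  funext y
  simp only [zfun, g0, aa, cc]

lemma lap4_zfun : lap4 zfun = fun y => hh0 (‖y‖ ^ 2) := by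
  funext y
  rw [zfun_eq, lap4_radial g0 g1 g2 hasDerivAt_g0 hasDerivAt_g1 y]
  have ht := t_pos (sq_nonneg ‖y‖)
  simp only [g1, g2, hh0]
  field_simp
  ring

/-- The function `z` satisfies `(−Δ)² z = Δ(Δz) = e^{64π² z}` pointwise on `ℝ⁴`. -/
theorem stmt_12 (x : EuclideanSpace ℝ (Fin 4)) :
    lap4 (lap4 zfun) x = Real.exp (64 * π ^ 2 * zfun x) := by
  rw [lap4_zfun, lap4_radial hh0 hh1 hh2 hasDerivAt_hh0 hasDerivAt_hh1 x]
  have ht := t_pos (sq_nonneg ‖x‖)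
  have hrhs : 64 * π ^ 2 * zfun x = -Real.log ((1 + aa * ‖x‖ ^ 2) ^ 4) := by
    rw [Real.log_pow]
    simp only [zfun, aa]
    have := Real.pi_ne_zero
    push_cast
    field_simp
    ring
  rw [hrhs, Real.exp_neg, Real.exp_log (pow_pos ht 4)]
  simp only [hh1, hh2]
  rw [cc_aa_sq]
  field_simp
  ring
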